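/- For every integer d ≥ 2 and every real k with 0 < k < 1, the function n ↦ Q_{d,k}(n) = (d(k − 2√(n−1)) − k)·(((√n − k)/√n)^{1/d} − 1) − 2k is monotone increasing on the interval [1, ∞) and converges to 0 as n → ∞. -/

import Mathlib

set_option maxHeartbeats 1000000

open Real Filter

/-- `Q_{d,k}(n) = (d(k − 2√(n−1)) − k)·(((√n − k)/√n)^{1/d} − 1) − 2k`. -/
noncomputable def Qfun (d : ℕ) (k : ℝ) (n : ℝ) : ℝ :=
  ((d : ℝ) * (k - 2 * Real.sqrt (n - 1)) - k) *
      (((Real.sqrt n - k) / Real.sqrt n) ^ (1 / (d : ℝ)) - 1) -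
    2 * k


-- quadratic lower bound for -log(1-w)
lemma log_quad {w : ℝ} (h0 : 0 ≤ w) (h1 : w < 1) :
    w + w ^ 2 / 2 ≤ -Real.log (1 - w) := by
  have key : MonotoneOn (fun x : ℝ => -Real.log (1 - x) - x - x ^ 2 / 2) (Set.Ico 0 1) := by
    apply monotoneOn_of_deriv_nonneg (convex_Ico 0 1)
    · apply ContinuousOn.sub
      apply ContinuousOn.sub
      · exact (Real.continuousOn_log.comp (by fun_prop)
          (fun x hx => by simp [Set.mem_Ico] at hx ⊢; intro h; nlinarith [hx.2])).neg
      · fun_prop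
      · fun_prop
    · intro x hx
      rw [interior_Ico] at hx
      have h1x : (1:ℝ) - x ≠ 0 := by simp [Set.mem_Ioo] at hx; intro h; nlinarith [hx.2]
      have : HasDerivAt (fun x : ℝ => -Real.log (1 - x) - x - x ^ 2 / 2)
          (-((1 - x)⁻¹ * (-1)) - 1 - 2 * x / 2) x := by
        have hl : HasDerivAt (fun x : ℝ => Real.log (1 - x)) ((1 - x)⁻¹ * (-1)) x :=
          (Real.hasDerivAt_log h1x).comp x (by simpa using (hasDerivAt_id x).const_sub 1)
        exact ((hl.neg.sub (hasDerivAt_id x)).sub (by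
          simpa using ((hasDerivAt_pow 2 x).div_const 2)))
      exact this.differentiableAt.differentiableWithinAt
    · intro x hx
      rw [interior_Ico] at hx
      simp only [Set.mem_Ioo] at hx
      have h1x : (0:ℝ) < 1 - x := by linarith
      have : HasDerivAt (fun x : ℝ => -Real.log (1 - x) - x - x ^ 2 / 2)
          (-((1 - x)⁻¹ * (-1)) - 1 - 2 * x / 2) x := by
        have hl : HasDerivAt (fun x : ℝ => Real.log (1 - x)) ((1 - x)⁻¹ * (-1)) x :=
          (Real.hasDerivAt_log h1x.ne').comp x (by simpa using (hasDerivAt_id x).const_sub 1)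
        exact ((hl.neg.sub (hasDerivAt_id x)).sub (by
          simpa using ((hasDerivAt_pow 2 x).div_const 2)))
      rw [this.deriv]
      have : 1 + x ≤ (1 - x)⁻¹ := by
        rw [← one_div]
        exact (le_div_iff₀ h1x).2 (by nlinarith)
      nlinarith
  have := key (Set.mem_Ico.2 ⟨le_refl 0, by norm_num⟩) (Set.mem_Ico.2 ⟨h0, h1⟩) h0
  simp at this
  nlinarith


-- key rpow lower bound
lemma rpow_neg_inv_bound {u : ℝ} (hu0 : 0 < u) (hu1 : u < 1) {d : ℕ} (hd : 1 ≤ d) :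
    1 + (1 - u) / d + ((d : ℝ) + 1) * (1 - u) ^ 2 / (2 * (d : ℝ) ^ 2)
      ≤ u ^ (-(1 / (d : ℝ))) := by
  set w : ℝ := 1 - u with hw
  have hw0 : 0 ≤ w := by simp [hw]; linarith
  have hw1 : w < 1 := by simp [hw]; linarith
  have hL : w + w ^ 2 / 2 ≤ -Real.log u := by
    have := log_quad hw0 hw1
    simpa [hw] using this
  have hdr : (1 : ℝ) ≤ (d : ℝ) := by exact_mod_cast hd
  have hdr0 : (0 : ℝ) < (d : ℝ) := by linarith
  set L : ℝ := -Real.log u with hLdef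
  have hL0 : 0 ≤ L := by nlinarith
  have hrw : u ^ (-(1 / (d : ℝ))) = Real.exp (L / d) := by
    rw [Real.rpow_def_of_pos hu0]
    congr 1
    field_simp [hLdef]
    exact hLdef.symm
  rw [hrw]
  have hexp := Real.quadratic_le_exp_of_nonneg (by positivity : (0:ℝ) ≤ L / d)
  have hLw : w ≤ L := by nlinarith
  have hsq : w ^ 2 ≤ L ^ 2 := by nlinarith
  have h1 : w / d + w ^ 2 / (2 * d) ≤ L / d := by
    rw [div_add_div _ _ (by positivity) (by positivity), div_le_div_iff₀ (by positivity) (by positivity)]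
    have h2 := mul_le_mul_of_nonneg_left hL (by positivity : (0:ℝ) ≤ 2*(d:ℝ)^2)
    ring_nf
    ring_nf at h2
    linarith
  calc 1 + (1 - u) / d + ((d : ℝ) + 1) * (1 - u) ^ 2 / (2 * (d : ℝ) ^ 2)
      = 1 + (w / d + w ^ 2 / (2 * d)) + w ^ 2 / (2 * d ^ 2) := by
        rw [← hw]; field_simp; ring
    _ ≤ 1 + L / d + L ^ 2 / (2 * d ^ 2) := by
        have : w ^ 2 / (2 * d ^ 2) ≤ L ^ 2 / (2 * d ^ 2) := by
          apply div_le_div_of_nonneg_right hsq (by positivity) |>.trans_eq rfl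
        linarith
    _ = 1 + L / d + (L / d) ^ 2 / 2 := by field_simp
    _ ≤ Real.exp (L / d) := hexp


lemma Qfun_hasDerivAt (d : ℕ) (hd : 2 ≤ d) {k : ℝ} (hk1 : k < 1)
    {n : ℝ} (hn : 1 < n) :
    HasDerivAt (Qfun d k)
      ((-(d : ℝ) / Real.sqrt (n - 1)) *
          (((Real.sqrt n - k) / Real.sqrt n) ^ (1 / (d : ℝ)) - 1) +
        ((d : ℝ) * (k - 2 * Real.sqrt (n - 1)) - k) *
          (1 / (d : ℝ) * ((Real.sqrt n - k) / Real.sqrt n) ^ (1 / (d : ℝ) - 1) *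
            (k / (2 * Real.sqrt n ^ 3)))) n := by
  have hn0 : (0 : ℝ) < n := by linarith
  have hs1 : 1 < Real.sqrt n := by
    rw [show (1:ℝ) = Real.sqrt 1 by simp]
    exact Real.sqrt_lt_sqrt (by norm_num) hn
  have hs0 : (0:ℝ) < Real.sqrt n := by linarith
  have ht0 : (0:ℝ) < Real.sqrt (n - 1) := Real.sqrt_pos.2 (by linarith)
  -- derivative of n ↦ √(n-1)
  have hinner : HasDerivAt (fun x : ℝ => x - 1) 1 n := by
    simpa using (hasDerivAt_id n).sub_const 1
  have hsq : HasDerivAt (fun x : ℝ => Real.sqrt (x - 1)) (1 / (2 * Real.sqrt (n - 1)) * 1) n :=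
    (Real.hasDerivAt_sqrt (show n - 1 ≠ 0 by linarith)).comp n hinner
  -- derivative of A
  have hA : HasDerivAt (fun x : ℝ => (d : ℝ) * (k - 2 * Real.sqrt (x - 1)) - k)
      (-(d : ℝ) / Real.sqrt (n - 1)) n := by
    have h := (((hsq.const_mul 2).const_sub k).const_mul (d : ℝ)).sub_const k
    refine h.congr_deriv ?_
    field_simp
  -- derivative of u
  have hs' : HasDerivAt Real.sqrt (1 / (2 * Real.sqrt n)) n := Real.hasDerivAt_sqrt hn0.ne'
  have hU : HasDerivAt (fun x : ℝ => (Real.sqrt x - k) / Real.sqrt x)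
      (k / (2 * Real.sqrt n ^ 3)) n := by
    have h := (hs'.sub_const k).div hs' hs0.ne'
    refine h.congr_deriv ?_
    have hnn : Real.sqrt n ^ 2 = n := Real.sq_sqrt hn0.le
    rw [div_eq_div_iff (by positivity) (by positivity)]
    rw [show Real.sqrt n ^ 3 = n * Real.sqrt n by rw [pow_succ, hnn]]
    field_simp
    ring_nf
    rw [hnn]
    ring
  -- derivative of B
  have hB : HasDerivAt
      (fun x : ℝ => ((Real.sqrt x - k) / Real.sqrt x) ^ (1 / (d : ℝ)) - 1)
      (1 / (d : ℝ) * ((Real.sqrt n - k) / Real.sqrt n) ^ (1 / (d : ℝ) - 1) *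
        (k / (2 * Real.sqrt n ^ 3))) n := by
    have hr := Real.hasDerivAt_rpow_const
      (x := (Real.sqrt n - k) / Real.sqrt n) (p := 1 / (d : ℝ))
      (Or.inl (by
        have : 0 < (Real.sqrt n - k) / Real.sqrt n := div_pos (by linarith) hs0
        exact this.ne'))
    exact ((hr.comp n hU).sub_const 1)
  exact (hA.mul hB).sub_const (2 * k)


lemma deriv_core {d s t u v k : ℝ} (hd : 2 ≤ d) (hs1 : 1 < s) (ht0 : 0 < t)
    (ht2 : t ^ 2 = s ^ 2 - 1) (hst : s - t ≤ 1) (hk0 : 0 < k) (hk1 : k < 1)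
    (hu : u = (s - k) / s) (hv0 : 0 < v)
    (hC : 1 + (1 - u) / d + (d + 1) * (1 - u) ^ 2 / (2 * d ^ 2) ≤ v⁻¹) :
    0 ≤ (-d / t) * (v - 1) +
        (d * (k - 2 * t) - k) * (1 / d * (v / u) * (k / (2 * s ^ 3))) := by
  have hs0 : (0:ℝ) < s := by linarith
  have hd0 : (0:ℝ) < d := by linarith
  have hu0 : (0:ℝ) < u := by rw [hu]; exact div_pos (by linarith) hs0
  have hu1 : u < 1 := by rw [hu, div_lt_one hs0]; linarith
  set D : ℝ := (-d / t) * (v - 1) +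
        (d * (k - 2 * t) - k) * (1 / d * (v / u) * (k / (2 * s ^ 3))) with hD
  set M : ℝ := 2 * d * s ^ 3 * u * t / v with hM
  have hMpos : 0 < M := by positivity
  have hid : D * M = 2 * d ^ 2 * s ^ 3 * (u * (v⁻¹ - 1)) + (d * k - 2 * d * t - k) * k * t := by
    rw [hD, hM]
    field_simp
    ring
  have hF1 : 2 * d ^ 2 * s ^ 3 * (u * ((1 - u) / d + (d + 1) * (1 - u) ^ 2 / (2 * d ^ 2)))
      ≤ 2 * d ^ 2 * s ^ 3 * (u * (v⁻¹ - 1)) := by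
    apply mul_le_mul_of_nonneg_left _ (by positivity)
    apply mul_le_mul_of_nonneg_left _ hu0.le
    linarith
  have hpoly : 2 * d ^ 2 * s ^ 3 * (u * ((1 - u) / d + (d + 1) * (1 - u) ^ 2 / (2 * d ^ 2)))
      = 2 * d * k * s ^ 2 - (d - 1) * k ^ 2 * s - (d + 1) * k ^ 3 := by
    rw [hu]
    have h1u : 1 - (s - k) / s = k / s := by field_simp; ring
    rw [h1u]
    field_simp
    ring
  have hk2 : k ^ 2 ≤ k := by nlinarith
  have hk3 : k ^ 3 ≤ k := by nlinarith
  have b1 : (d - 1) * k ^ 2 * (s - t) ≤ (d - 1) * k ^ 2 :=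
    (mul_le_mul_of_nonneg_left hst (by nlinarith : (0:ℝ) ≤ (d - 1) * k ^ 2)).trans_eq
      (mul_one _)
  have b2 : (d - 1) * k ^ 2 ≤ (d - 1) * k := by nlinarith
  have b3 : (d + 1) * k ^ 3 ≤ (d + 1) * k := by nlinarith
  have h4 : 2 * d * k * t ^ 2 = 2 * d * k * (s ^ 2 - 1) := by rw [ht2]
  have hfinal : 0 ≤ 2 * d * k * s ^ 2 - (d - 1) * k ^ 2 * s - (d + 1) * k ^ 3
      + (d * k - 2 * d * t - k) * k * t := by nlinarith [b1, b2, b3, h4]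
  have hDM : 0 ≤ D * M := by rw [hid]; linarith [hF1, hpoly]
  by_contra hcon
  push_neg at hcon
  have : D * M < 0 := mul_neg_of_neg_of_pos hcon hMpos
  linarith

lemma Qfun_deriv_nonneg (d : ℕ) (hd : 2 ≤ d) {k : ℝ} (hk0 : 0 < k) (hk1 : k < 1)
    {n : ℝ} (hn : 1 < n) :
    0 ≤ (-(d : ℝ) / Real.sqrt (n - 1)) *
          (((Real.sqrt n - k) / Real.sqrt n) ^ (1 / (d : ℝ)) - 1) +
        ((d : ℝ) * (k - 2 * Real.sqrt (n - 1)) - k) *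
          (1 / (d : ℝ) * ((Real.sqrt n - k) / Real.sqrt n) ^ (1 / (d : ℝ) - 1) *
            (k / (2 * Real.sqrt n ^ 3))) := by
  have hn0 : (0 : ℝ) < n := by linarith
  have hdr : (2:ℝ) ≤ (d:ℝ) := by exact_mod_cast hd
  have hs1 : 1 < Real.sqrt n := by
    rw [show (1:ℝ) = Real.sqrt 1 by simp]
    exact Real.sqrt_lt_sqrt (by norm_num) hn
  have hs0 : (0:ℝ) < Real.sqrt n := by linarith
  have ht0 : (0:ℝ) < Real.sqrt (n - 1) := Real.sqrt_pos.2 (by linarith)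
  have hs2 : Real.sqrt n ^ 2 = n := Real.sq_sqrt hn0.le
  have ht2 : Real.sqrt (n - 1) ^ 2 = Real.sqrt n ^ 2 - 1 := by
    rw [Real.sq_sqrt (by linarith : (0:ℝ) ≤ n - 1), hs2]
  have hst : Real.sqrt n - Real.sqrt (n - 1) ≤ 1 := by
    have h1 : Real.sqrt n - 1 ≤ Real.sqrt (n - 1) := by
      rw [show Real.sqrt n - 1 = Real.sqrt ((Real.sqrt n - 1) ^ 2) by
        rw [Real.sqrt_sq (by linarith)]]
      exact Real.sqrt_le_sqrt (by nlinarith)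
    linarith
  have hu0 : (0:ℝ) < (Real.sqrt n - k) / Real.sqrt n := div_pos (by linarith) hs0
  have hu1 : (Real.sqrt n - k) / Real.sqrt n < 1 := by
    rw [div_lt_one hs0]; linarith
  have hv0 : (0:ℝ) < ((Real.sqrt n - k) / Real.sqrt n) ^ (1 / (d:ℝ)) :=
    Real.rpow_pos_of_pos hu0 _
  have hu1d : ((Real.sqrt n - k) / Real.sqrt n) ^ (1 / (d:ℝ) - 1)
      = ((Real.sqrt n - k) / Real.sqrt n) ^ (1 / (d:ℝ)) / ((Real.sqrt n - k) / Real.sqrt n) := by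
    rw [Real.rpow_sub hu0, Real.rpow_one]
  have hC : 1 + (1 - (Real.sqrt n - k) / Real.sqrt n) / (d:ℝ)
      + ((d:ℝ) + 1) * (1 - (Real.sqrt n - k) / Real.sqrt n) ^ 2 / (2 * (d:ℝ) ^ 2)
      ≤ (((Real.sqrt n - k) / Real.sqrt n) ^ (1 / (d:ℝ)))⁻¹ := by
    have h := rpow_neg_inv_bound hu0 hu1 (by omega : 1 ≤ d)
    rwa [Real.rpow_neg hu0.le] at h
  rw [hu1d]
  exact deriv_core hdr hs1 ht0 ht2 hst hk0 hk1 rfl hv0 hC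


/-- For every integer `d ≥ 2` and `0 < k < 1`, the function `n ↦ Q_{d,k}(n)` is monotone
increasing on `[1, ∞)` and converges to `0` as `n → ∞`. -/
theorem Qfun_monotone_and_tendsto_zero (d : ℕ) (hd : 2 ≤ d) (k : ℝ)
    (hk0 : 0 < k) (hk1 : k < 1) :
    MonotoneOn (Qfun d k) (Set.Ici 1) ∧
      Filter.Tendsto (Qfun d k) Filter.atTop (nhds 0) := by
  have hd0 : (d : ℝ) ≠ 0 := Nat.cast_ne_zero.2 (by omega)
  constructor
  · -- monotone
    apply monotoneOn_of_deriv_nonneg (convex_Ici 1)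
    · -- continuity
      unfold Qfun
      apply ContinuousOn.sub _ continuousOn_const
      apply ContinuousOn.mul
      · fun_prop
      · apply ContinuousOn.sub _ continuousOn_const
        apply ContinuousOn.rpow_const
        · apply ContinuousOn.div (by fun_prop) (by fun_prop)
          intro x hx
          have : (1:ℝ) ≤ x := hx
          have : (0:ℝ) < Real.sqrt x := Real.sqrt_pos.2 (by linarith)
          exact this.ne'
        · intro x hx
          right
          positivity
    · intro x hx
      rw [interior_Ici] at hx
      exact (Qfun_hasDerivAt d hd hk1 hx).differentiableAt.differentiableWithinAt
    · intro x hx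
      rw [interior_Ici] at hx
      rw [(Qfun_hasDerivAt d hd hk1 hx).deriv]
      exact Qfun_deriv_nonneg d hd hk0 hk1 hx
  · -- tendsto
    have hsqrt_atTop : Tendsto Real.sqrt atTop atTop := by
      apply tendsto_atTop_atTop.2
      intro b
      refine ⟨(max b 0) ^ 2, fun a ha => ?_⟩
      have h1 : Real.sqrt ((max b 0) ^ 2) ≤ Real.sqrt a := Real.sqrt_le_sqrt ha
      rw [Real.sqrt_sq (le_max_right b 0)] at h1
      exact (le_max_left b 0).trans h1
    have t1 : Tendsto (fun n : ℝ => 1 - 1 / n) atTop (nhds 1) := by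
      simpa using (tendsto_const_nhds (x := (1:ℝ))).sub (tendsto_inv_atTop_zero (𝕜 := ℝ))
    have t2 : Tendsto (fun n : ℝ => Real.sqrt (1 - 1 / n)) atTop (nhds 1) := by
      have := (Real.continuous_sqrt.tendsto 1).comp t1
      simpa [Function.comp_def] using this
    have t4 : Tendsto (fun n : ℝ => ((d:ℝ) - 1) * k / Real.sqrt n) atTop (nhds 0) :=
      tendsto_const_nhds.div_atTop hsqrt_atTop
    have t5 : Tendsto (fun n : ℝ => (Real.sqrt n - k) / Real.sqrt n) atTop (nhds 1) := by
      have h : Tendsto (fun n : ℝ => 1 - k / Real.sqrt n) atTop (nhds 1) := by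
        simpa using tendsto_const_nhds.sub (tendsto_const_nhds.div_atTop hsqrt_atTop)
      apply h.congr'
      filter_upwards [eventually_ge_atTop (1:ℝ)] with n hn
      have hs0 : (0:ℝ) < Real.sqrt n := Real.sqrt_pos.2 (by linarith)
      field_simp
    have t6 : Tendsto (fun n : ℝ => ((Real.sqrt n - k) / Real.sqrt n) ^ (1 / (d:ℝ)))
        atTop (nhds 1) := by
      have hc := (Real.continuousAt_rpow_const 1 (1 / (d:ℝ)) (Or.inl one_ne_zero)).tendsto
      have := hc.comp t5
      simpa [Real.one_rpow, Function.comp_def] using this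
    have t7 : Tendsto (fun n : ℝ => ∑ i ∈ Finset.range d,
        (((Real.sqrt n - k) / Real.sqrt n) ^ (1 / (d:ℝ))) ^ i) atTop (nhds (d:ℝ)) := by
      have := tendsto_finset_sum (Finset.range d) (fun i _ => t6.pow i)
      simpa using this
    have tR : Tendsto (fun n : ℝ => k * (2 * (d:ℝ) * Real.sqrt (1 - 1 / n)
        - ((d:ℝ) - 1) * k / Real.sqrt n) /
        (∑ i ∈ Finset.range d, (((Real.sqrt n - k) / Real.sqrt n) ^ (1 / (d:ℝ))) ^ i)
        - 2 * k) atTop (nhds 0) := by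
      have hnum : Tendsto (fun n : ℝ => k * (2 * (d:ℝ) * Real.sqrt (1 - 1 / n)
          - ((d:ℝ) - 1) * k / Real.sqrt n)) atTop (nhds (k * (2 * (d:ℝ) * 1 - 0))) :=
        tendsto_const_nhds.mul (((tendsto_const_nhds.mul t2)).sub t4)
      have hdiv := hnum.div t7 hd0
      have := hdiv.sub (tendsto_const_nhds (x := 2 * k))
      convert this using 2
      · rfl
      · field_simp
        ring
    -- identity
    apply tR.congr'
    filter_upwards [eventually_gt_atTop (1:ℝ)] with n hn
    have hn0 : (0:ℝ) < n := by linarith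
    have hs1 : 1 < Real.sqrt n := by
      rw [show (1:ℝ) = Real.sqrt 1 by simp]
      exact Real.sqrt_lt_sqrt (by norm_num) hn
    have hs0 : (0:ℝ) < Real.sqrt n := by linarith
    have hu0 : (0:ℝ) < (Real.sqrt n - k) / Real.sqrt n := div_pos (by linarith) hs0
    have hv0 : (0:ℝ) < ((Real.sqrt n - k) / Real.sqrt n) ^ (1 / (d:ℝ)) :=
      Real.rpow_pos_of_pos hu0 _
    set v : ℝ := ((Real.sqrt n - k) / Real.sqrt n) ^ (1 / (d:ℝ)) with hv
    have hvd : v ^ d = (Real.sqrt n - k) / Real.sqrt n := by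
      rw [hv, ← Real.rpow_natCast (((Real.sqrt n - k) / Real.sqrt n) ^ (1 / (d:ℝ))) d,
        ← Real.rpow_mul hu0.le]
      rw [show 1 / (d:ℝ) * (d:ℝ) = 1 by field_simp, Real.rpow_one]
    have hG0 : (0:ℝ) < ∑ i ∈ Finset.range d, v ^ i := by
      apply Finset.sum_pos (fun i _ => pow_pos hv0 i)
      exact Finset.nonempty_range_iff.2 (by omega)
    have hgeom : (v - 1) * ∑ i ∈ Finset.range d, v ^ i
        = (Real.sqrt n - k) / Real.sqrt n - 1 := by
      rw [mul_geom_sum, hvd]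
    have hveq : v - 1 = ((Real.sqrt n - k) / Real.sqrt n - 1) / ∑ i ∈ Finset.range d, v ^ i :=
      (eq_div_iff hG0.ne').2 hgeom
    have hsqq : Real.sqrt (1 - 1 / n) = Real.sqrt (n - 1) / Real.sqrt n := by
      rw [show (1:ℝ) - 1 / n = (n - 1) / n by field_simp, Real.sqrt_div (by linarith) n]
    rw [hsqq]
    unfold Qfun
    rw [← hv, hveq]
    field_simp
    ring
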